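/- arXiv:2507.08577 — 2 statements merged into one kernel-verified Lean document; each statement's English description precedes it below -/
import Mathlib

section
/- Let 0 < q < p, b > 1, A > 0, and let (I_k)_{k≥0} be a sequence of positive reals that is bounded above and satisfies I_k ≤ A^{1/p} b^{k/p} I_{k+1}^{1−q/p} for all k ≥ 0. Then I₀ ≤ C A^{1/q}, where C = b^{(1/p) Σ_{l=0}^{∞} l (1−q/p)^l} depends only on p, q, b. -/
theorem backward_iteration (p q b A : ℝ) (hq : 0 < q) (hqp : q < p) (hb : 1 < b)
    (hA : 0 < A) (I : ℕ → ℝ) (hIpos : ∀ k, 0 < I k)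
    (M : ℝ) (hbdd : ∀ k, I k ≤ M)
    (hrec : ∀ k : ℕ, I k ≤ A ^ (1 / p) * b ^ ((k : ℝ) / p) * I (k + 1) ^ (1 - q / p)) :
    I 0 ≤ b ^ ((1 / p) * ∑' l : ℕ, (l : ℝ) * (1 - q / p) ^ l) * A ^ (1 / q) := by
  have hp : 0 < p := hq.trans hqp
  set θ : ℝ := 1 - q / p with hθdef
  have hθ0 : 0 ≤ θ := by
    have h1 : q / p < 1 := (div_lt_one hp).mpr hqp
    rw [hθdef]; linarith
  have hθ1 : θ < 1 := by
    have h1 : 0 < q / p := div_pos hq hp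
    rw [hθdef]; linarith
  have hb0 : (0:ℝ) < b := lt_trans one_pos hb
  set M' : ℝ := max M 1 with hM'
  have hM'1 : (1:ℝ) ≤ M' := le_max_right _ _
  have hlogM' : 0 ≤ Real.log M' := Real.log_nonneg hM'1
  have hlogrec : ∀ k : ℕ, Real.log (I k) ≤
      (1/p) * Real.log A + ((k:ℝ)/p) * Real.log b + θ * Real.log (I (k+1)) := by
    intro k
    have h := Real.log_le_log (hIpos k) (hrec k)
    have hA' : A ^ (1/p) ≠ 0 := (Real.rpow_pos_of_pos hA _).ne'
    have hb' : b ^ ((k:ℝ)/p) ≠ 0 := (Real.rpow_pos_of_pos hb0 _).ne'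
    have hI' : I (k+1) ^ θ ≠ 0 := (Real.rpow_pos_of_pos (hIpos (k+1)) _).ne'
    rw [Real.log_mul (mul_ne_zero hA' hb') hI', Real.log_mul hA' hb',
        Real.log_rpow hA, Real.log_rpow hb0, Real.log_rpow (hIpos (k+1))] at h
    linarith
  set S : ℕ → ℝ := fun n => ∑ l ∈ Finset.range n, θ ^ l with hS
  set T : ℕ → ℝ := fun n => ∑ l ∈ Finset.range n, (l:ℝ) * θ ^ l with hT
  have key : ∀ n, Real.log (I 0) ≤
      (1/p) * S n * Real.log A + (1/p) * T n * Real.log b + θ^n * Real.log (I n) := by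
    intro n
    induction n with
    | zero => simp [hS, hT]
    | succ n ih =>
      have h2 : θ^n * Real.log (I n) ≤
          θ^n * ((1/p) * Real.log A + ((n:ℝ)/p) * Real.log b + θ * Real.log (I (n+1))) :=
        mul_le_mul_of_nonneg_left (hlogrec n) (pow_nonneg hθ0 n)
      have hSn : S (n+1) = S n + θ^n := by simp [hS, Finset.sum_range_succ]
      have hTn : T (n+1) = T n + (n:ℝ) * θ^n := by simp [hT, Finset.sum_range_succ]
      have hθn : θ^(n+1) = θ^n * θ := pow_succ θ n
      rw [hSn, hTn, hθn]
      refine ih.trans ?_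
      have hring : 1/p*(S n+θ^n)*Real.log A + 1/p*(T n + (n:ℝ)*θ^n)*Real.log b
            + θ^n*θ*Real.log (I (n+1))
          = (1/p*S n*Real.log A + 1/p*T n*Real.log b)
            + θ^n*(1/p*Real.log A + (n:ℝ)/p*Real.log b + θ*Real.log (I (n+1))) := by
        ring
      rw [hring]
      linarith [h2]
  have keyM : ∀ n, Real.log (I 0) ≤
      (1/p) * S n * Real.log A + (1/p) * T n * Real.log b + θ^n * Real.log M' := by
    intro n
    refine (key n).trans ?_
    have h3 : Real.log (I n) ≤ Real.log M' :=
      Real.log_le_log (hIpos n) ((hbdd n).trans (le_max_left _ _))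
    have h4 := mul_le_mul_of_nonneg_left h3 (pow_nonneg hθ0 n)
    linarith
  have hθabs : ‖θ‖ < 1 := by rw [Real.norm_eq_abs, abs_of_nonneg hθ0]; exact hθ1
  have hsumT : Summable (fun l : ℕ => (l:ℝ) * θ ^ l) := by
    have := summable_pow_mul_geometric_of_norm_lt_one 1 hθabs
    simpa using this
  have hTlim : Filter.Tendsto T Filter.atTop (nhds (∑' l : ℕ, (l:ℝ) * θ ^ l)) :=
    hsumT.hasSum.tendsto_sum_nat
  have hSlim : Filter.Tendsto S Filter.atTop (nhds (1 - θ)⁻¹) :=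
    (hasSum_geometric_of_lt_one hθ0 hθ1).tendsto_sum_nat
  have hθlim : Filter.Tendsto (fun n : ℕ => θ ^ n) Filter.atTop (nhds 0) :=
    tendsto_pow_atTop_nhds_zero_of_lt_one hθ0 hθ1
  have hglim : Filter.Tendsto
      (fun n => (1/p) * S n * Real.log A + (1/p) * T n * Real.log b + θ^n * Real.log M')
      Filter.atTop
      (nhds ((1/p) * (1-θ)⁻¹ * Real.log A +
        (1/p) * (∑' l : ℕ, (l:ℝ) * θ ^ l) * Real.log b + 0 * Real.log M')) :=
    (((hSlim.const_mul (1/p)).mul_const (Real.log A)).add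
      ((hTlim.const_mul (1/p)).mul_const (Real.log b))).add (hθlim.mul_const _)
  have hL : Real.log (I 0) ≤ (1/p) * (1-θ)⁻¹ * Real.log A +
      (1/p) * (∑' l : ℕ, (l:ℝ) * θ ^ l) * Real.log b + 0 * Real.log M' :=
    ge_of_tendsto' hglim keyM
  have hinv : (1/p) * (1-θ)⁻¹ = 1/q := by
    have h5 : 1 - θ = q / p := by rw [hθdef]; ring
    rw [h5]
    field_simp
  rw [hinv, zero_mul, add_zero] at hL
  calc I 0 = Real.exp (Real.log (I 0)) := (Real.exp_log (hIpos 0)).symm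
    _ ≤ Real.exp (1/q * Real.log A + (1/p) * (∑' l : ℕ, (l:ℝ) * θ ^ l) * Real.log b) :=
        Real.exp_le_exp.mpr hL
    _ = b ^ ((1 / p) * ∑' l : ℕ, (l : ℝ) * θ ^ l) * A ^ (1 / q) := by
        rw [Real.rpow_def_of_pos hA, Real.rpow_def_of_pos hb0, ← Real.exp_add,
          Real.exp_eq_exp]
        ring
end

section
/- Let p > 1, τ ∈ [1−p, 1), C ≥ 1, ε > 0, and let Φ, Ψ : (0,∞) → (0,∞) satisfy C^{-1}(r/R)^{τ} Φ(R)/Φ(r) ≤ Ψ(R)/Ψ(r) for all 0 < r ≤ R. Define Φ^{(ε)}(r) = Φ(ε)·r/ε for r ≤ ε and Φ^{(ε)}(r) = Φ(r) for r > ε; and Ψ^{(ε)}(r) = Ψ(ε)·(r/ε)^p for r ≤ ε and Ψ^{(ε)}(r) = Ψ(r) for r > ε. Then C^{-1}(r/R)^{τ} Φ^{(ε)}(R)/Φ^{(ε)}(r) ≤ Ψ^{(ε)}(R)/Ψ^{(ε)}(r) for all 0 < r ≤ R. -/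
/-!
The ratio inequality is multiplicative along a chain `r ≤ s ≤ R`: the factors `(r/s)^τ (s/R)^τ`,
`Φ(s)/Φ(r) · Φ(R)/Φ(s)` and `Ψ(s)/Ψ(r) · Ψ(R)/Ψ(s)` telescope, and the constants multiply.
Below `ε` the regularized pair is `r ↦ r` and `r ↦ r^p` up to constants, and for `x = R/r ≥ 1`
the inequality `x^{-τ} · x ≤ x^p` is `x^{1-τ} ≤ x^p`, i.e. `τ ≥ 1 - p`, with constant `1`.
So a pair `r ≤ ε < R` is handled by splitting at `ε`, with constant `1 · C`.
-/

open Real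

def RatioBound (C τ : ℝ) (F G : ℝ → ℝ) (r R : ℝ) : Prop :=
  C⁻¹ * (r / R) ^ τ * (F R / F r) ≤ G R / G r

section RatioBound

variable {C C₁ C₂ τ r s R : ℝ} {F G : ℝ → ℝ}

theorem RatioBound.trans (hF : ∀ x, 0 < x → 0 < F x) (hG : ∀ x, 0 < x → 0 < G x)
    (hr : 0 < r) (hrs : r ≤ s) (hsR : s ≤ R) (hC₂ : 0 ≤ C₂)
    (h₁ : RatioBound C₁ τ F G r s) (h₂ : RatioBound C₂ τ F G s R) :
    RatioBound (C₁ * C₂) τ F G r R := by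
  have hs : 0 < s := hr.trans_le hrs
  have hR : 0 < R := hs.trans_le hsR
  have hFs := hF s hs
  have hGs := hG s hs
  have hsplit : (r / R) ^ τ = (r / s) ^ τ * (s / R) ^ τ := by
    rw [← mul_rpow (by positivity) (by positivity), div_mul_div_cancel₀ hs.ne']
  have hprod := mul_le_mul h₁ h₂ (by have := hF R hR; positivity)
    (by have := hG r hr; positivity)
  calc (C₁ * C₂)⁻¹ * (r / R) ^ τ * (F R / F r)
      = C₁⁻¹ * (r / s) ^ τ * (F s / F r) * (C₂⁻¹ * (s / R) ^ τ * (F R / F s)) := by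
        rw [hsplit, mul_inv]; field_simp
    _ ≤ G s / G r * (G R / G s) := hprod
    _ = G R / G r := by field_simp

end RatioBound

theorem rpow_neg_mul_self_le_rpow {p τ x : ℝ} (hτ : 1 - p ≤ τ) (hx : 1 ≤ x) :
    x⁻¹ ^ τ * x ≤ x ^ p := by
  have hx0 : 0 < x := one_pos.trans_le hx
  calc x⁻¹ ^ τ * x = x ^ (-τ + 1) := by
        rw [inv_rpow hx0.le, ← rpow_neg hx0.le, rpow_add hx0, rpow_one]
    _ ≤ x ^ p := rpow_le_rpow_of_exponent_le hx (by linarith)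

theorem ratioBound_id_rpow {C p τ r R : ℝ} (hC : 1 ≤ C) (hτ : 1 - p ≤ τ) (hr : 0 < r)
    (hrR : r ≤ R) : RatioBound C τ id (· ^ p) r R := by
  unfold RatioBound
  rw [id, id, ← div_rpow (hr.trans_le hrR).le hr.le]
  have hx : 1 ≤ R / r := (one_le_div hr).mpr hrR
  have hinv : (R / r)⁻¹ = r / R := inv_div R r
  calc C⁻¹ * (r / R) ^ τ * (R / r) ≤ 1 * (r / R) ^ τ * (R / r) := by
        gcongr
        · have := hr.trans_le hrR; positivity
        · exact inv_le_one_of_one_le₀ hC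
    _ ≤ (R / r) ^ p := by rw [one_mul, ← hinv]; exact rpow_neg_mul_self_le_rpow hτ hx

/-- The paper's `Φ^{(ε)}`. -/
noncomputable def linearBelow (ε : ℝ) (Φ : ℝ → ℝ) (r : ℝ) : ℝ :=
  if r ≤ ε then Φ ε * r / ε else Φ r

/-- The paper's `Ψ^{(ε)}`. -/
noncomputable def rpowBelow (p ε : ℝ) (Ψ : ℝ → ℝ) (r : ℝ) : ℝ :=
  if r ≤ ε then Ψ ε * (r / ε) ^ p else Ψ r

section Regularization

variable {p ε r : ℝ} {Φ Ψ : ℝ → ℝ}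

theorem linearBelow_of_le (h : r ≤ ε) : linearBelow ε Φ r = Φ ε * r / ε := if_pos h

theorem linearBelow_of_ge (hε : ε ≠ 0) (h : ε ≤ r) : linearBelow ε Φ r = Φ r := by
  unfold linearBelow
  split_ifs with h'
  · rw [le_antisymm h' h, mul_div_cancel_right₀ _ hε]
  · rfl

theorem rpowBelow_of_le (h : r ≤ ε) : rpowBelow p ε Ψ r = Ψ ε * (r / ε) ^ p := if_pos h

theorem rpowBelow_of_ge (hε : ε ≠ 0) (h : ε ≤ r) : rpowBelow p ε Ψ r = Ψ r := by
  unfold rpowBelow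
  split_ifs with h'
  · rw [le_antisymm h' h, div_self hε, one_rpow, mul_one]
  · rfl

theorem linearBelow_pos (hε : 0 < ε) (hΦ : ∀ x, 0 < x → 0 < Φ x) (hr : 0 < r) :
    0 < linearBelow ε Φ r := by
  unfold linearBelow
  split_ifs
  · have := hΦ ε hε; positivity
  · exact hΦ r hr

theorem rpowBelow_pos (hε : 0 < ε) (hΨ : ∀ x, 0 < x → 0 < Ψ x) (hr : 0 < r) :
    0 < rpowBelow p ε Ψ r := by
  unfold rpowBelow
  split_ifs
  · have := hΨ ε hε; positivity
  · exact hΨ r hr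

variable {C τ R : ℝ}

theorem ratioBound_below (hC : 1 ≤ C) (hτ : 1 - p ≤ τ) (hε : 0 < ε)
    (hΦ : 0 < Φ ε) (hΨ : 0 < Ψ ε) (hr : 0 < r) (hrR : r ≤ R) (hRε : R ≤ ε) :
    RatioBound C τ (linearBelow ε Φ) (rpowBelow p ε Ψ) r R := by
  have hR : 0 < R := hr.trans_le hrR
  have hΦratio : linearBelow ε Φ R / linearBelow ε Φ r = R / r := by
    rw [linearBelow_of_le hRε, linearBelow_of_le (hrR.trans hRε)]
    field_simp
  have hΨratio : rpowBelow p ε Ψ R / rpowBelow p ε Ψ r = (R / r) ^ p := by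
    rw [rpowBelow_of_le hRε, rpowBelow_of_le (hrR.trans hRε), mul_div_mul_left _ _ hΨ.ne',
      ← div_rpow (by positivity) (by positivity), div_div_div_cancel_right₀ hε.ne']
  have hpower := ratioBound_id_rpow hC hτ hr hrR
  unfold RatioBound at hpower ⊢
  rwa [hΦratio, hΨratio, div_rpow hR.le hr.le]

theorem ratioBound_above (hε : ε ≠ 0) (hεr : ε ≤ r) (hrR : r ≤ R)
    (h : RatioBound C τ Φ Ψ r R) :
    RatioBound C τ (linearBelow ε Φ) (rpowBelow p ε Ψ) r R := by
  unfold RatioBound at h ⊢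
  rwa [linearBelow_of_ge hε hεr, linearBelow_of_ge hε (hεr.trans hrR),
    rpowBelow_of_ge hε hεr, rpowBelow_of_ge hε (hεr.trans hrR)]

end Regularization

theorem rsvr_regularization_general (p τ C ε : ℝ) (hτ1 : 1 - p ≤ τ)
    (hC : 1 ≤ C) (hε : 0 < ε)
    (Φ Ψ : ℝ → ℝ) (hΦ : ∀ r : ℝ, 0 < r → 0 < Φ r) (hΨ : ∀ r : ℝ, 0 < r → 0 < Ψ r)
    (h : ∀ r R : ℝ, 0 < r → r ≤ R →
      C⁻¹ * (r / R) ^ τ * (Φ R / Φ r) ≤ Ψ R / Ψ r) :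
    ∀ r R : ℝ, 0 < r → r ≤ R →
      C⁻¹ * (r / R) ^ τ *
          ((if R ≤ ε then Φ ε * R / ε else Φ R) /
            (if r ≤ ε then Φ ε * r / ε else Φ r)) ≤
        (if R ≤ ε then Ψ ε * (R / ε) ^ p else Ψ R) /
          (if r ≤ ε then Ψ ε * (r / ε) ^ p else Ψ r) := by
  intro r R hr hrR
  show RatioBound C τ (linearBelow ε Φ) (rpowBelow p ε Ψ) r R
  have hΦε := hΦ ε hε
  have hΨε := hΨ ε hε
  by_cases hRε : R ≤ ε
  · exact ratioBound_below hC hτ1 hε hΦε hΨε hr hrR hRε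
  by_cases hrε : r ≤ ε
  · have hεR : ε ≤ R := (not_le.mp hRε).le
    have hlow := ratioBound_below (C := 1) le_rfl hτ1 hε hΦε hΨε hr hrε le_rfl
    have hhigh := ratioBound_above (p := p) hε.ne' le_rfl hεR (h ε R hε hεR)
    simpa only [one_mul] using hlow.trans (fun _ => linearBelow_pos hε hΦ)
      (fun _ => rpowBelow_pos hε hΨ) hr hrε hεR (zero_le_one.trans hC) hhigh
  · exact ratioBound_above hε.ne' (not_le.mp hrε).le hrR (h r R hr hrR)

theorem rsvr_regularization (p τ C ε : ℝ) (hp : 1 < p) (hτ1 : 1 - p ≤ τ) (hτ2 : τ < 1)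
    (hC : 1 ≤ C) (hε : 0 < ε)
    (Φ Ψ : ℝ → ℝ) (hΦ : ∀ r : ℝ, 0 < r → 0 < Φ r) (hΨ : ∀ r : ℝ, 0 < r → 0 < Ψ r)
    (h : ∀ r R : ℝ, 0 < r → r ≤ R →
      C⁻¹ * (r / R) ^ τ * (Φ R / Φ r) ≤ Ψ R / Ψ r) :
    ∀ r R : ℝ, 0 < r → r ≤ R →
      C⁻¹ * (r / R) ^ τ *
          ((if R ≤ ε then Φ ε * R / ε else Φ R) /
            (if r ≤ ε then Φ ε * r / ε else Φ r)) ≤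
        (if R ≤ ε then Ψ ε * (R / ε) ^ p else Ψ R) /
          (if r ≤ ε then Ψ ε * (r / ε) ^ p else Ψ r) :=
  rsvr_regularization_general p τ C ε hτ1 hC hε Φ Ψ hΦ hΨ h
end
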